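/- arXiv:1810.02294 — 5 statements merged into one kernel-verified Lean document; each statement's English description precedes it below -/
import Mathlib

section
/- For a symmetric positive semidefinite matrix K indexed by V and disjoint nonempty subsets A, B, C of V with K_{A∪B∪C} and K_C invertible, the (A,B) block of (K_{A∪B∪C})^{-1} is zero if and only if K_{A,B} = K_{A,C} · (K_C)^{-1} · K_{C,B}. -/
open Matrix

/-- Principal submatrix of `K` on the finset `A`. -/
def psub {V : Type*} (K : Matrix V V ℝ) (A : Finset V) : Matrix A A ℝ :=
  K.submatrix Subtype.val Subtype.val

/-- The `(A,B)` block of `K`. -/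
def bsub {V : Type*} (K : Matrix V V ℝ) (A B : Finset V) : Matrix A B ℝ :=
  K.submatrix Subtype.val Subtype.val

/-!
Order `A ∪ B ∪ C` as `(A ⊕ B) ⊕ C`. By the Schur complement formula the `A ∪ B` block of
`(K_{A∪B∪C})⁻¹` is `S⁻¹`, where `S = K_{A∪B} - K_{A∪B,C} K_C⁻¹ K_{C,A∪B}` has `(A,B)` block
`K_{A,B} - K_{A,C} K_C⁻¹ K_{C,B}`. An invertible matrix is block lower triangular iff its inverse
is, so the `(A,B)` block of `S⁻¹` vanishes iff that of `S` does.
-/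

namespace Matrix

variable {m n R : Type*} [Fintype m] [Fintype n] [DecidableEq m] [DecidableEq n] [CommRing R]

theorem toBlocks₁₁_inv_fromBlocks_of_isUnit_det₂₂ (A : Matrix m m R) (B : Matrix m n R)
    (C : Matrix n m R) {D : Matrix n n R} (hD : IsUnit D.det) :
    (fromBlocks A B C D)⁻¹.toBlocks₁₁ = (A - B * D⁻¹ * C)⁻¹ := by
  let := D.invertibleOfIsUnitDet hD
  by_cases hS : IsUnit (A - B * ⅟D * C)
  · let := hS.invertible
    let := fromBlocks₂₂Invertible A B C D
    rw [← invOf_eq_nonsing_inv, invOf_fromBlocks₂₂_eq, toBlocks_fromBlocks₁₁,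
      invOf_eq_nonsing_inv, invOf_eq_nonsing_inv]
  · -- both sides are the junk value `0`
    have hM : ¬IsUnit (fromBlocks A B C D) := isUnit_fromBlocks_iff_of_invertible₂₂.not.mpr hS
    rw [invOf_eq_nonsing_inv] at hS
    rw [nonsing_inv_eq_ringInverse, nonsing_inv_eq_ringInverse, Ring.inverse_non_unit _ hM,
      Ring.inverse_non_unit _ hS]
    rfl

theorem isUnit_det_sub_mul_inv_mul_of_isUnit_det_fromBlocks {A : Matrix m m R}
    {B : Matrix m n R} {C : Matrix n m R} {D : Matrix n n R} (hD : IsUnit D.det)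
    (hM : IsUnit (fromBlocks A B C D).det) : IsUnit (A - B * D⁻¹ * C).det := by
  let := D.invertibleOfIsUnitDet hD
  rw [det_fromBlocks₂₂, invOf_eq_nonsing_inv] at hM
  exact isUnit_of_mul_isUnit_right hM

theorem toBlocks₁₂_nonsing_inv_eq_zero_of_toBlocks₁₂_eq_zero {M : Matrix (m ⊕ n) (m ⊕ n) R}
    (hM : IsUnit M.det) (h : M.toBlocks₁₂ = 0) : M⁻¹.toBlocks₁₂ = 0 := by
  rw [← fromBlocks_toBlocks M, h] at hM ⊢
  rw [det_fromBlocks_zero₁₂, IsUnit.mul_iff] at hM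
  rw [inv_fromBlocks_zero₁₂_of_isUnit_iff, toBlocks_fromBlocks₁₂]
  simp only [isUnit_iff_isUnit_det, hM.1, hM.2]

theorem toBlocks₁₂_nonsing_inv_eq_zero_iff {M : Matrix (m ⊕ n) (m ⊕ n) R}
    (hM : IsUnit M.det) : M⁻¹.toBlocks₁₂ = 0 ↔ M.toBlocks₁₂ = 0 := by
  refine ⟨fun h => ?_, toBlocks₁₂_nonsing_inv_eq_zero_of_toBlocks₁₂_eq_zero hM⟩
  simpa only [nonsing_inv_nonsing_inv M hM] using
    toBlocks₁₂_nonsing_inv_eq_zero_of_toBlocks₁₂_eq_zero (isUnit_nonsing_inv_det M hM) h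

theorem toBlocks₁₂_fromBlocks_sub_fromRows_mul_fromCols {m₁ m₂ n₁ n₂ l : Type*} [Fintype l]
    (P₁₁ : Matrix m₁ n₁ R) (P₁₂ : Matrix m₁ n₂ R) (P₂₁ : Matrix m₂ n₁ R) (P₂₂ : Matrix m₂ n₂ R)
    (X₁ : Matrix m₁ l R) (X₂ : Matrix m₂ l R) (N : Matrix l l R) (Y₁ : Matrix l n₁ R)
    (Y₂ : Matrix l n₂ R) :
    (fromBlocks P₁₁ P₁₂ P₂₁ P₂₂ - fromRows X₁ X₂ * N * fromCols Y₁ Y₂).toBlocks₁₂ =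
      P₁₂ - X₁ * N * Y₂ := by
  rw [fromRows_mul, fromRows_mul_fromCols]
  ext i j
  rfl

end Matrix

section UnionEquivSum

variable {V : Type*} [DecidableEq V] {A B C : Finset V}

def unionEquivSum (hAB : Disjoint A B) (hABC : Disjoint (A ∪ B) C) :
    (A ⊕ B) ⊕ C ≃ ↥(A ∪ B ∪ C) :=
  ((Equiv.Finset.union A B hAB).sumCongr (Equiv.refl C)).trans
    (Equiv.Finset.union (A ∪ B) C hABC)

variable (hAB : Disjoint A B) (hABC : Disjoint (A ∪ B) C)

theorem psub_union_submatrix_unionEquivSum (K : Matrix V V ℝ) :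
    (psub K (A ∪ B ∪ C)).submatrix (unionEquivSum hAB hABC) (unionEquivSum hAB hABC) =
      fromBlocks (fromBlocks (psub K A) (bsub K A B) (bsub K B A) (psub K B))
        (fromRows (bsub K A C) (bsub K B C)) (fromCols (bsub K C A) (bsub K C B)) (psub K C) := by
  ext ((a | b) | c) ((a' | b') | c') <;> rfl

theorem toBlocks₁₂_toBlocks₁₁_submatrix_unionEquivSum_eq_zero_iff {R : Type*} [Zero R]
    (N : Matrix ↥(A ∪ B ∪ C) ↥(A ∪ B ∪ C) R) :
    (N.submatrix (unionEquivSum hAB hABC) (unionEquivSum hAB hABC)).toBlocks₁₁.toBlocks₁₂ = 0 ↔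
      ∀ i j : ↥(A ∪ B ∪ C), (i : V) ∈ A → (j : V) ∈ B → N i j = 0 := by
  refine ⟨fun h i j hi hj => congr_fun₂ h ⟨i, hi⟩ ⟨j, hj⟩, fun h => ?_⟩
  ext a b
  exact h _ _ a.2 b.2

end UnionEquivSum

theorem stmt1_general {V : Type*} [Fintype V] [DecidableEq V]
    (K : Matrix V V ℝ)
    (A B C : Finset V)
    (hAB : Disjoint A B) (hAC : Disjoint A C) (hBC : Disjoint B C)
    (hinv1 : IsUnit (psub K (A ∪ B ∪ C)).det) (hinv2 : IsUnit (psub K C).det) :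
    (∀ i j : ↥(A ∪ B ∪ C), (i : V) ∈ A → (j : V) ∈ B →
        (psub K (A ∪ B ∪ C))⁻¹ i j = 0)
      ↔ bsub K A B = bsub K A C * (psub K C)⁻¹ * bsub K C B := by
  have hABC : Disjoint (A ∪ B) C := Finset.disjoint_union_left.2 ⟨hAC, hBC⟩
  have hblocks := psub_union_submatrix_unionEquivSum hAB hABC K
  have hdet := hinv1
  rw [← det_submatrix_equiv_self (unionEquivSum hAB hABC), hblocks] at hdet
  have hschur := isUnit_det_sub_mul_inv_mul_of_isUnit_det_fromBlocks hinv2 hdet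
  rw [← toBlocks₁₂_toBlocks₁₁_submatrix_unionEquivSum_eq_zero_iff hAB hABC,
    ← inv_submatrix_equiv, hblocks, toBlocks₁₁_inv_fromBlocks_of_isUnit_det₂₂ _ _ _ hinv2,
    toBlocks₁₂_nonsing_inv_eq_zero_iff hschur, toBlocks₁₂_fromBlocks_sub_fromRows_mul_fromCols,
    sub_eq_zero]

/-- For a symmetric PSD matrix `K` and disjoint nonempty `A, B, C` with `K_{A∪B∪C}` and `K_C`
invertible: the `(A,B)` block of `(K_{A∪B∪C})⁻¹` is zero iff `K_{A,B} = K_{A,C} K_C⁻¹ K_{C,B}`. -/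
theorem stmt1 {V : Type*} [Fintype V] [DecidableEq V]
    (K : Matrix V V ℝ) (hsym : K.IsSymm) (hpsd : K.PosSemidef)
    (A B C : Finset V) (hA : A.Nonempty) (hB : B.Nonempty) (hC : C.Nonempty)
    (hAB : Disjoint A B) (hAC : Disjoint A C) (hBC : Disjoint B C)
    (hinv1 : IsUnit (psub K (A ∪ B ∪ C)).det) (hinv2 : IsUnit (psub K C).det) :
    (∀ i j : ↥(A ∪ B ∪ C), (i : V) ∈ A → (j : V) ∈ B →
        (psub K (A ∪ B ∪ C))⁻¹ i j = 0)
      ↔ bsub K A B = bsub K A C * (psub K C)⁻¹ * bsub K C B :=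
  stmt1_general K A B C hAB hAC hBC hinv1 hinv2
end

section
/- Let M be a symmetric invertible matrix indexed by A∪B (A, B disjoint and nonempty). Then the (A,B) block of M^{-1} is zero if and only if the (A,B) block of M is zero. -/
open Matrix

lemma aux_blocks {α β : Type*} [Fintype α] [Fintype β] [DecidableEq α] [DecidableEq β]
    (M : Matrix (α ⊕ β) (α ⊕ β) ℝ) (hsym : M.IsSymm) (hinv : IsUnit M.det)
    (h : M.toBlocks₁₂ = 0) : M⁻¹.toBlocks₁₂ = 0 := by
  have h21 : M.toBlocks₂₁ = 0 := by
    ext i j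
    have := congrFun (congrFun h j) i
    simp only [toBlocks₁₂, of_apply] at this
    simp only [toBlocks₂₁, of_apply, Matrix.zero_apply]
    rw [← hsym, transpose_apply, this]
    rfl
  have hM : M = fromBlocks M.toBlocks₁₁ 0 0 M.toBlocks₂₂ := by
    rw [← h, ← h21, fromBlocks_toBlocks]
  rw [hM] at hinv
  rw [det_fromBlocks_zero₂₁] at hinv
  have hA : IsUnit M.toBlocks₁₁ := (isUnit_iff_isUnit_det _).2 (isUnit_of_mul_isUnit_left hinv)
  have hD : IsUnit M.toBlocks₂₂ := (isUnit_iff_isUnit_det _).2 (isUnit_of_mul_isUnit_right hinv)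
  rw [hM, inv_fromBlocks_zero₂₁_of_isUnit_iff _ _ _ (iff_of_true hA hD)]
  simp

/-- For a symmetric invertible matrix `M` indexed by the disjoint union of two nonempty sets,
the off-diagonal `(A,B)` block of `M⁻¹` is zero iff the `(A,B)` block of `M` is zero. -/
theorem stmt3 {α β : Type*} [Fintype α] [Fintype β] [DecidableEq α] [DecidableEq β]
    [Nonempty α] [Nonempty β]
    (M : Matrix (α ⊕ β) (α ⊕ β) ℝ) (hsym : M.IsSymm) (hinv : IsUnit M.det) :
    M⁻¹.toBlocks₁₂ = 0 ↔ M.toBlocks₁₂ = 0 := by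
  constructor
  · intro h
    have hs' : M⁻¹.IsSymm := by
      unfold Matrix.IsSymm
      rw [transpose_nonsing_inv, hsym]
    have hd' : IsUnit M⁻¹.det := isUnit_nonsing_inv_det M hinv
    have := aux_blocks M⁻¹ hs' hd' h
    rwa [nonsing_inv_nonsing_inv M hinv] at this
  · exact aux_blocks M hsym hinv
end

section
/- Let X be a determinantal point process with kernel K and let A, B, C ⊆ V be disjoint and nonempty with K_{A∪B∪C} and K_C invertible. Then the (A,B) block of (K_{A∪B∪C})^{-1} is zero if and only if X_A and X_B are conditionally independent given the event {X_C = 1_C} (i.e., for all i_A ∈ {0,1}^A and i_B ∈ {0,1}^B, P(X_A = i_A, X_B = i_B | X_C = 1_C) = P(X_A = i_A | X_C = 1_C)·P(X_B = i_B | X_C = 1_C)). -/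
set_option linter.unusedSectionVars false
set_option maxHeartbeats 1000000

open Matrix MeasureTheory

namespace Stmt9


variable {V : Type*} [Fintype V] [DecidableEq V]

@[simp] lemma psub_apply (K : Matrix V V ℝ) (S : Finset V) (i j : S) :
    psub K S i j = K i j := rfl

def unionEquiv (S T : Finset V) (h : Disjoint S T) : (↥S ⊕ ↥T) ≃ ↥(S ∪ T) where
  toFun := Sum.elim (fun i => ⟨i.1, Finset.mem_union_left _ i.2⟩)
    (fun j => ⟨j.1, Finset.mem_union_right _ j.2⟩)
  invFun x := if hx : (x : V) ∈ S then Sum.inl ⟨x, hx⟩ else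
    Sum.inr ⟨x, (Finset.mem_union.1 x.2).resolve_left hx⟩
  left_inv := by
    rintro (⟨i, hi⟩ | ⟨j, hj⟩)
    · simp [hi]
    · simp [Finset.disjoint_right.1 h hj]
  right_inv x := by
    by_cases hx : (x : V) ∈ S <;> simp [hx]

@[simp] lemma unionEquiv_inl (S T : Finset V) (h : Disjoint S T) (i : S) :
    ((unionEquiv S T h (Sum.inl i) : ↥(S ∪ T)) : V) = i := rfl

@[simp] lemma unionEquiv_inr (S T : Finset V) (h : Disjoint S T) (j : T) :
    ((unionEquiv S T h (Sum.inr j) : ↥(S ∪ T)) : V) = j := rfl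

lemma psub_union_eq_fromBlocks (K : Matrix V V ℝ) (S T : Finset V) (h : Disjoint S T) :
    (psub K (S ∪ T)).submatrix (unionEquiv S T h) (unionEquiv S T h) =
      fromBlocks (psub K S) (K.submatrix (Subtype.val : S → V) (Subtype.val : T → V))
        (K.submatrix (Subtype.val : T → V) (Subtype.val : S → V)) (psub K T) := by
  ext i j
  rcases i with i | i <;> rcases j with j | j <;> rfl

/-- The Schur complement of `K_C` in `K`, as a `V × V` matrix. -/
noncomputable def schur (K : Matrix V V ℝ) (C : Finset V) : Matrix V V ℝ :=
  fun i j => K i j - ∑ c : C, ∑ c' : C, K i c * (psub K C)⁻¹ c c' * K c' j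

lemma schur_block (K : Matrix V V ℝ) (S C : Finset V) :
    psub K S - (K.submatrix (Subtype.val : S → V) (Subtype.val : C → V)) * (psub K C)⁻¹ *
      (K.submatrix (Subtype.val : C → V) (Subtype.val : S → V)) = psub (schur K C) S := by
  ext i j
  simp only [Matrix.sub_apply, psub_apply, schur, Matrix.mul_apply, Finset.sum_mul,
    Matrix.submatrix_apply]
  congr 1
  rw [Finset.sum_comm]

lemma det_psub_union (K : Matrix V V ℝ) (S C : Finset V) (hSC : Disjoint S C)
    (h2 : IsUnit (psub K C).det) :
    (psub K (S ∪ C)).det = (psub K C).det * (psub (schur K C) S).det := by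
  haveI := (psub K C).invertibleOfIsUnitDet h2
  have h1 : (psub K (S ∪ C)).det =
      ((psub K (S ∪ C)).submatrix (unionEquiv S C hSC) (unionEquiv S C hSC)).det :=
    (Matrix.det_submatrix_equiv_self _ _).symm
  rw [h1, psub_union_eq_fromBlocks, Matrix.det_fromBlocks₂₂]
  congr 1
  rw [invOf_eq_nonsing_inv]
  exact congrArg Matrix.det (schur_block K S C)

lemma schur_isSymm (K : Matrix V V ℝ) (hK : K.IsSymm) (C : Finset V) (i j : V) :
    schur K C j i = schur K C i j := by
  have hC : (psub K C).IsSymm := by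
    apply Matrix.IsSymm.ext
    intro a b
    exact hK.apply a b
  have hCi : ((psub K C)⁻¹).IsSymm := by
    rw [Matrix.IsSymm, Matrix.transpose_nonsing_inv, hC.eq]
  simp only [schur]
  rw [hK.apply j i]
  congr 1
  rw [Finset.sum_comm]
  refine Finset.sum_congr rfl fun c _ => Finset.sum_congr rfl fun c' _ => ?_
  rw [hK.apply j c', hK.apply c i, hCi.apply c' c]
  ring


lemma det_psub_singleton (N : Matrix V V ℝ) (a : V) : (psub N {a}).det = N a a := by
  haveI : Subsingleton (↥({a} : Finset V)) :=
    ⟨fun x y => Subtype.ext ((Finset.mem_singleton.1 x.2).trans (Finset.mem_singleton.1 y.2).symm)⟩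
  rw [Matrix.det_eq_elem_of_subsingleton _ ⟨a, Finset.mem_singleton_self a⟩]
  rfl

def pairEquiv (a b : V) (hab : a ≠ b) : (Fin 2) ≃ ↥({a, b} : Finset V) where
  toFun := ![⟨a, Finset.mem_insert_self a {b}⟩,
    ⟨b, Finset.mem_insert_of_mem (Finset.mem_singleton_self b)⟩]
  invFun x := if (x : V) = a then 0 else 1
  left_inv := by
    intro i
    fin_cases i <;> simp [hab.symm]
  right_inv := by
    rintro ⟨x, hx⟩
    rcases Finset.mem_insert.1 hx with h | h
    · simp [h]
    · have := Finset.mem_singleton.1 h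
      subst this
      simp [Ne.symm hab]

lemma det_psub_pair (N : Matrix V V ℝ) (a b : V) (hab : a ≠ b) :
    (psub N {a, b}).det = N a a * N b b - N a b * N b a := by
  have h1 : (psub N {a, b}).det =
      ((psub N {a, b}).submatrix (pairEquiv a b hab) (pairEquiv a b hab)).det :=
    (Matrix.det_submatrix_equiv_self _ _).symm
  rw [h1, Matrix.det_fin_two]
  rfl

lemma offdiag_zero_inv {α β : Type*} [Fintype α] [Fintype β] [DecidableEq α] [DecidableEq β]
    (X : Matrix (α ⊕ β) (α ⊕ β) ℝ) (hsym : ∀ i j, X j i = X i j) (hdet : IsUnit X.det)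
    (h0 : ∀ a b, X (Sum.inl a) (Sum.inr b) = 0) :
    ∀ a b, X⁻¹ (Sum.inl a) (Sum.inr b) = 0 := by
  have hX : X = fromBlocks X.toBlocks₁₁ 0 0 X.toBlocks₂₂ := by
    ext i j
    rcases i with a | a <;> rcases j with b | b
    · rfl
    · exact h0 a b
    · show X (Sum.inr a) (Sum.inl b) = 0
      rw [hsym (Sum.inl b) (Sum.inr a)]; exact h0 b a
    · rfl
  have hdets : IsUnit X.toBlocks₁₁.det ∧ IsUnit X.toBlocks₂₂.det := by
    rw [hX, Matrix.det_fromBlocks_zero₁₂] at hdet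
    exact ⟨isUnit_of_mul_isUnit_left hdet, isUnit_of_mul_isUnit_right hdet⟩
  have hinv : X⁻¹ = fromBlocks X.toBlocks₁₁⁻¹ 0 0 X.toBlocks₂₂⁻¹ := by
    apply Matrix.inv_eq_right_inv
    nth_rewrite 1 [hX]
    rw [Matrix.fromBlocks_multiply]
    simp only [Matrix.mul_zero, Matrix.zero_mul, add_zero, zero_add,
      Matrix.mul_nonsing_inv _ hdets.1, Matrix.mul_nonsing_inv _ hdets.2]
    exact Matrix.fromBlocks_one
  intro a b
  rw [hinv]
  rfl

lemma offdiag_inv_iff {α β : Type*} [Fintype α] [Fintype β] [DecidableEq α] [DecidableEq β]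
    (X : Matrix (α ⊕ β) (α ⊕ β) ℝ) (hsym : ∀ i j, X j i = X i j) (hdet : IsUnit X.det) :
    (∀ a b, X⁻¹ (Sum.inl a) (Sum.inr b) = 0) ↔ (∀ a b, X (Sum.inl a) (Sum.inr b) = 0) := by
  constructor
  · intro h a b
    have ht : Xᵀ = X := by
      ext i j
      rw [Matrix.transpose_apply]
      exact hsym i j
    have ht2 : X⁻¹ᵀ = X⁻¹ := by rw [Matrix.transpose_nonsing_inv, ht]
    have hsym' : ∀ i j, X⁻¹ j i = X⁻¹ i j := by
      intro i j
      conv_rhs => rw [← ht2]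
      rfl
    have hdet' : IsUnit X⁻¹.det := X.isUnit_nonsing_inv_det hdet
    have := offdiag_zero_inv X⁻¹ hsym' hdet' h a b
    rwa [Matrix.nonsing_inv_nonsing_inv _ hdet] at this
  · exact offdiag_zero_inv X hsym hdet


lemma block_iff (K : Matrix V V ℝ) (hK : K.IsSymm) (A B C : Finset V)
    (hAB : Disjoint A B) (hAC : Disjoint A C) (hBC : Disjoint B C)
    (hinv1 : IsUnit (psub K (A ∪ B ∪ C)).det) (hinv2 : IsUnit (psub K C).det) :
    (∀ i j : ↥(A ∪ B ∪ C), (i : V) ∈ A → (j : V) ∈ B →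
        (psub K (A ∪ B ∪ C))⁻¹ i j = 0)
      ↔ ∀ a ∈ A, ∀ b ∈ B, schur K C a b = 0 := by
  classical
  have hWC : Disjoint (A ∪ B) C := Finset.disjoint_union_left.2 ⟨hAC, hBC⟩
  set eW := unionEquiv A B hAB with heW
  set eD := unionEquiv (A ∪ B) C hWC with heD
  set M := psub K (A ∪ B ∪ C) with hM
  set NW := psub (schur K C) (A ∪ B) with hNW
  set KWC := K.submatrix (Subtype.val : ↥(A ∪ B) → V) (Subtype.val : ↥C → V) with hKWC
  set KCW := K.submatrix (Subtype.val : ↥C → V) (Subtype.val : ↥(A ∪ B) → V) with hKCW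
  haveI iC : Invertible (psub K C) := (psub K C).invertibleOfIsUnitDet hinv2
  have hdetM : M.det = (psub K C).det * NW.det := det_psub_union K (A ∪ B) C hWC hinv2
  have hNWdet : IsUnit NW.det := by
    rw [hdetM] at hinv1
    exact isUnit_of_mul_isUnit_right hinv1
  haveI iNW : Invertible NW := NW.invertibleOfIsUnitDet hNWdet
  have hblocks : M.submatrix eD eD = fromBlocks (psub K (A ∪ B)) KWC KCW (psub K C) :=
    psub_union_eq_fromBlocks K (A ∪ B) C hWC
  have hschur : psub K (A ∪ B) - KWC * ⅟ (psub K C) * KCW = NW := by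
    rw [invOf_eq_nonsing_inv]
    exact schur_block K (A ∪ B) C
  haveI iS : Invertible (psub K (A ∪ B) - KWC * ⅟ (psub K C) * KCW) := by
    rw [hschur]; exact iNW
  haveI iM' : Invertible (fromBlocks (psub K (A ∪ B)) KWC KCW (psub K C)) :=
    Matrix.fromBlocks₂₂Invertible _ _ _ _
  have key : ∀ x y : ↥(A ∪ B), M⁻¹ (eD (Sum.inl x)) (eD (Sum.inl y)) = NW⁻¹ x y := by
    intro x y
    have h1 : (M.submatrix eD eD)⁻¹ = M⁻¹.submatrix eD eD := Matrix.inv_submatrix_equiv M eD eD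
    have h2 : M⁻¹ (eD (Sum.inl x)) (eD (Sum.inl y)) =
        (M.submatrix eD eD)⁻¹ (Sum.inl x) (Sum.inl y) := by rw [h1]; rfl
    rw [h2, hblocks]
    have h3 : (fromBlocks (psub K (A ∪ B)) KWC KCW (psub K C))⁻¹ =
        ⅟ (fromBlocks (psub K (A ∪ B)) KWC KCW (psub K C)) :=
      (invOf_eq_nonsing_inv _).symm
    rw [h3, Matrix.invOf_fromBlocks₂₂_eq]
    show ⅟ (psub K (A ∪ B) - KWC * ⅟ (psub K C) * KCW) x y = NW⁻¹ x y
    have h4 : ⅟ (psub K (A ∪ B) - KWC * ⅟ (psub K C) * KCW) =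
        (psub K (A ∪ B) - KWC * ⅟ (psub K C) * KCW)⁻¹ := invOf_eq_nonsing_inv _
    rw [h4, hschur]
  have hNW'' : ∀ i j, (NW.submatrix eW eW) j i = (NW.submatrix eW eW) i j := by
    intro i j
    show schur K C _ _ = schur K C _ _
    exact schur_isSymm K hK C _ _
  have hNW''det : IsUnit (NW.submatrix eW eW).det := by
    rwa [Matrix.det_submatrix_equiv_self]
  have hsubinv : (NW.submatrix eW eW)⁻¹ = NW⁻¹.submatrix eW eW :=
    Matrix.inv_submatrix_equiv NW eW eW
  have hbridge : ∀ (x : ↥A) (y : ↥B), (NW.submatrix eW eW)⁻¹ (Sum.inl x) (Sum.inr y)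
      = NW⁻¹ (eW (Sum.inl x)) (eW (Sum.inr y)) := by
    intro x y; rw [hsubinv]; rfl
  have hiff := offdiag_inv_iff (NW.submatrix eW eW) hNW'' hNW''det
  constructor
  · intro h a ha b hb
    have h0 : ∀ (x : ↥A) (y : ↥B), (NW.submatrix eW eW)⁻¹ (Sum.inl x) (Sum.inr y) = 0 := by
      intro x y
      rw [hbridge, ← key]
      exact h _ _ (by simpa [heD, heW] using x.2) (by simpa [heD, heW] using y.2)
    exact hiff.mp h0 ⟨a, ha⟩ ⟨b, hb⟩
  · intro h i j hi hj
    have h0 : ∀ (x : ↥A) (y : ↥B), (NW.submatrix eW eW) (Sum.inl x) (Sum.inr y) = 0 :=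
      fun x y => h x x.2 y y.2
    have h1 := hiff.mpr h0 ⟨(i : V), hi⟩ ⟨(j : V), hj⟩
    rw [hbridge, ← key] at h1
    have hieq : eD (Sum.inl (eW (Sum.inl ⟨(i : V), hi⟩))) = i := Subtype.ext (by simp [heD, heW])
    have hjeq : eD (Sum.inl (eW (Sum.inr ⟨(j : V), hj⟩))) = j := Subtype.ext (by simp [heD, heW])
    rwa [hieq, hjeq] at h1


lemma det_psub_split (N : Matrix V V ℝ) (S₁ S₂ : Finset V) (h : Disjoint S₁ S₂)
    (h12 : ∀ i ∈ S₁, ∀ j ∈ S₂, N i j = 0) :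
    (psub N (S₁ ∪ S₂)).det = (psub N S₁).det * (psub N S₂).det := by
  rw [← Matrix.det_submatrix_equiv_self (unionEquiv S₁ S₂ h) (psub N (S₁ ∪ S₂)),
    psub_union_eq_fromBlocks N S₁ S₂ h]
  have hB : N.submatrix (Subtype.val : S₁ → V) (Subtype.val : S₂ → V) = 0 := by
    ext i j; exact h12 i i.2 j j.2
  rw [hB, Matrix.det_fromBlocks_zero₁₂]


variable {V : Type*} [DecidableEq V]

/-- 0/1 value of a boolean configuration at a point. -/
def Yv (y : V → Bool) (v : V) : ℝ := if y v then 1 else 0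

/-- Indicator that `y` is `true` on all of `S`. -/
def prY (y : V → Bool) (S : Finset V) : ℝ := ∏ v ∈ S, Yv y v

/-- Indicator that `y` agrees with `f` on all of `S`. -/
def brY (y : V → Bool) (f : V → Bool) (S : Finset V) : ℝ :=
  ∏ v ∈ S, (if f v then Yv y v else 1 - Yv y v)

lemma prY_eq (y : V → Bool) (S : Finset V) :
    prY y S = if (∀ v ∈ S, y v = true) then 1 else 0 := by
  rw [prY, ← Finset.prod_boole]
  rfl

lemma bracket_eq (x c : Bool) :
    (if c then (if x then (1:ℝ) else 0) else 1 - (if x then 1 else 0))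
      = if x = c then 1 else 0 := by
  cases x <;> cases c <;> norm_num

lemma brY_eq (y f : V → Bool) (S : Finset V) :
    brY y f S = if (∀ v ∈ S, y v = f v) then 1 else 0 := by
  rw [brY, ← Finset.prod_boole]
  exact Finset.prod_congr rfl fun v _ => bracket_eq (y v) (f v)

lemma prY_union (y : V → Bool) (S T : Finset V) (h : Disjoint S T) :
    prY y (S ∪ T) = prY y S * prY y T := Finset.prod_union h

lemma prY_insert (y : V → Bool) (a : V) (S : Finset V) (h : a ∉ S) :
    prY y (insert a S) = Yv y a * prY y S := Finset.prod_insert h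

/-- Inclusion–exclusion expansion of a product of `1 - Yv`. -/
lemma expand_prod (y : V → Bool) (T U : Finset V) (h : Disjoint T U) :
    prY y T * ∏ v ∈ U, (1 - Yv y v)
      = ∑ U' ∈ U.powerset, (-1 : ℝ) ^ U'.card * prY y (T ∪ U') := by
  have h1 : ∏ v ∈ U, (1 - Yv y v) = ∏ v ∈ U, (-Yv y v + 1) :=
    Finset.prod_congr rfl fun v _ => (neg_add_eq_sub (Yv y v) 1).symm
  rw [h1, Finset.prod_add, Finset.mul_sum]
  refine Finset.sum_congr rfl fun U' hU' => ?_
  have hU'U : U' ⊆ U := Finset.mem_powerset.1 hU'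
  have hTU' : Disjoint T U' := h.mono_right hU'U
  have h2 : ∏ v ∈ U', (-Yv y v) = (-1 : ℝ) ^ U'.card * ∏ v ∈ U', Yv y v := by
    calc ∏ v ∈ U', (-Yv y v) = ∏ v ∈ U', ((-1 : ℝ) * Yv y v) :=
          Finset.prod_congr rfl fun v _ => (neg_one_mul _).symm
      _ = (∏ _v ∈ U', (-1 : ℝ)) * ∏ v ∈ U', Yv y v := Finset.prod_mul_distrib
      _ = (-1 : ℝ) ^ U'.card * ∏ v ∈ U', Yv y v := by rw [Finset.prod_const]
  rw [Finset.prod_const_one, mul_one, h2, prY_union y T U' hTU']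
  show prY y T * ((-1:ℝ) ^ U'.card * prY y U') = _
  ring

/-- Splitting the agreement indicator via the true/false parts of `f`. -/
lemma brY_split (y f : V → Bool) (S : Finset V) :
    brY y f S = prY y (S.filter (fun v => f v = true))
      * ∏ v ∈ S.filter (fun v => ¬ (f v = true)), (1 - Yv y v) := by
  rw [brY, ← Finset.prod_filter_mul_prod_filter_not S (fun v => f v = true)]
  congr 1
  · refine Finset.prod_congr rfl fun v hv => ?_
    rw [if_pos (Finset.mem_filter.1 hv).2]
  · refine Finset.prod_congr rfl fun v hv => ?_
    have := (Finset.mem_filter.1 hv).2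
    rw [if_neg (by simpa using this)]

lemma sum_powerset_prod_ite (y : V → Bool) (W : Finset V) :
    ∑ R ∈ W.powerset, ∏ v ∈ W, (if v ∈ R then Yv y v else 1 - Yv y v) = 1 := by
  have h1 : ∏ v ∈ W, (Yv y v + (1 - Yv y v)) = 1 := by
    have h2 : ∀ v ∈ W, Yv y v + (1 - Yv y v) = 1 := fun v _ => by ring
    rw [Finset.prod_congr rfl h2, Finset.prod_const_one]
  have h3 : ∑ R ∈ W.powerset, ∏ v ∈ W, (if v ∈ R then Yv y v else 1 - Yv y v)
      = ∑ R ∈ W.powerset, (∏ v ∈ R, Yv y v) * ∏ v ∈ W \ R, (1 - Yv y v) := by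
    refine Finset.sum_congr rfl fun R hR => ?_
    have hRW : R ⊆ W := Finset.mem_powerset.1 hR
    rw [← Finset.prod_filter_mul_prod_filter_not W (fun v => v ∈ R)]
    congr 1
    · rw [Finset.filter_mem_eq_inter, Finset.inter_eq_right.2 hRW]
      exact Finset.prod_congr rfl fun v hv => if_pos hv
    · rw [Finset.sdiff_eq_filter]
      exact Finset.prod_congr rfl fun v hv => if_neg (Finset.mem_filter.1 hv).2
  rw [h3, ← Finset.prod_add]
  exact h1

/-- Summing the agreement indicator over configurations on `S` that are `true` at `a`. -/
lemma sum_brY (y : V → Bool) (S : Finset V) (a : V) (ha : a ∈ S) :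
    ∑ R ∈ (S.erase a).powerset, brY y (fun v => decide (v ∈ insert a R)) S = Yv y a := by
  have key : ∀ R ∈ (S.erase a).powerset,
      brY y (fun v => decide (v ∈ insert a R)) S
        = Yv y a * ∏ v ∈ S.erase a, (if v ∈ R then Yv y v else 1 - Yv y v) := by
    intro R hR
    have hRS : R ⊆ S.erase a := Finset.mem_powerset.1 hR
    have h1 : brY y (fun v => decide (v ∈ insert a R)) S
        = ∏ v ∈ S, (if v ∈ insert a R then Yv y v else 1 - Yv y v) := by
      refine Finset.prod_congr rfl fun v _ => ?_
      by_cases hv : v ∈ insert a R <;> simp [hv]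
    rw [h1, ← Finset.mul_prod_erase S _ ha, if_pos (Finset.mem_insert_self a R)]
    congr 1
    refine Finset.prod_congr rfl fun v hv => ?_
    have hva : v ≠ a := (Finset.mem_erase.1 hv).1
    by_cases hvR : v ∈ R
    · rw [if_pos (Finset.mem_insert_of_mem hvR), if_pos hvR]
    · rw [if_neg (by simp [hva, hvR]), if_neg hvR]
  rw [Finset.sum_congr rfl key, ← Finset.mul_sum, sum_powerset_prod_ite, mul_one]


open MeasureTheory

section Meas

variable {Ω : Type*} [MeasurableSpace Ω] (P : MeasureTheory.Measure Ω) [IsProbabilityMeasure P]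
  (X : Ω → V → Bool)

lemma measE (hmeas : ∀ v, Measurable fun ω => X ω v) (S : Finset V) (f : V → Bool) :
    MeasurableSet {ω | ∀ v ∈ S, X ω v = f v} := by
  have h : {ω | ∀ v ∈ S, X ω v = f v} = ⋂ v ∈ (S : Set V), (fun ω => X ω v) ⁻¹' {f v} := by
    ext ω; simp
  rw [h]
  exact MeasurableSet.biInter (S : Set V).to_countable
    fun v _ => (hmeas v) (measurableSet_singleton (f v))

lemma key_integral (F : Ω → ℝ) (Q : Ω → Prop) [DecidablePred Q]
    (hQ : MeasurableSet {ω | Q ω}) (hF : ∀ ω, F ω = if Q ω then 1 else 0) :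
    Integrable F P ∧ ∫ ω, F ω ∂P = (P {ω | Q ω}).toReal := by
  have hFeq : F = Set.indicator {ω | Q ω} (fun _ => (1:ℝ)) := by
    funext ω
    rw [hF ω]
    by_cases h : Q ω <;> simp [h]
  constructor
  · rw [hFeq]; exact (integrable_const 1).indicator hQ
  · rw [hFeq]
    exact integral_indicator_one hQ

lemma integral_prY (hmeas : ∀ v, Measurable fun ω => X ω v) (S : Finset V) :
    Integrable (fun ω => prY (X ω) S) P ∧
      ∫ ω, prY (X ω) S ∂P = (P {ω | ∀ v ∈ S, X ω v = true}).toReal :=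
  key_integral P (fun ω => prY (X ω) S) (fun ω => ∀ v ∈ S, X ω v = true)
    (measE X hmeas S (fun _ => true)) (fun ω => prY_eq (X ω) S)


lemma mul_ite_ite (p q : Prop) [Decidable p] [Decidable q] :
    (if p then (1:ℝ) else 0) * (if q then 1 else 0) = if p ∧ q then 1 else 0 := by
  by_cases hp : p <;> by_cases hq : q <;> simp [hp, hq]

lemma mul_ite_ite3 (p q r : Prop) [Decidable p] [Decidable q] [Decidable r] :
    (if p then (1:ℝ) else 0) * (if q then 1 else 0) * (if r then 1 else 0)
      = if (p ∧ q) ∧ r then 1 else 0 := by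
  by_cases hp : p <;> by_cases hq : q <;> by_cases hr : r <;> simp [hp, hq, hr]

end Meas


section Meas2

variable {Ω : Type*} [MeasurableSpace Ω] (P : MeasureTheory.Measure Ω) [IsProbabilityMeasure P]
  (X : Ω → V → Bool)

/-- Pointwise expansion of a marginal indicator. -/
lemma brY_mul_prY (y f : V → Bool) (A C : Finset V) (hAC : Disjoint A C) :
    brY y f A * prY y C = ∑ U ∈ (A.filter (fun v => ¬ (f v = true))).powerset,
      (-1:ℝ)^U.card * prY y ((A.filter (fun v => f v = true) ∪ U) ∪ C) := by
  set Tf := A.filter (fun v => f v = true) with hTf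
  set Ff := A.filter (fun v => ¬ (f v = true)) with hFf
  have hd : Disjoint Tf Ff := Finset.disjoint_filter_filter_not A A _
  rw [brY_split, expand_prod y Tf Ff hd, Finset.sum_mul]
  refine Finset.sum_congr rfl fun U hU => ?_
  have hUF : U ⊆ Ff := Finset.mem_powerset.1 hU
  have hdC : Disjoint (Tf ∪ U) C := Finset.disjoint_union_left.2
    ⟨hAC.mono_left (Finset.filter_subset _ _),
     hAC.mono_left (hUF.trans (Finset.filter_subset _ _))⟩
  rw [mul_assoc, ← prY_union y _ _ hdC]

/-- Pointwise expansion of the joint indicator. -/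
lemma brY_mul_brY_mul_prY (y f g : V → Bool) (A B C : Finset V)
    (hAB : Disjoint A B) (hAC : Disjoint A C) (hBC : Disjoint B C) :
    brY y f A * brY y g B * prY y C
      = ∑ U₁ ∈ (A.filter (fun v => ¬ (f v = true))).powerset,
        ∑ U₂ ∈ (B.filter (fun v => ¬ (g v = true))).powerset,
          (-1:ℝ)^U₁.card * (-1:ℝ)^U₂.card *
            prY y (((A.filter (fun v => f v = true) ∪ U₁)
              ∪ (B.filter (fun v => g v = true) ∪ U₂)) ∪ C) := by
  set Tf := A.filter (fun v => f v = true) with hTf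
  set Ff := A.filter (fun v => ¬ (f v = true)) with hFf
  set Tg := B.filter (fun v => g v = true) with hTg
  set Fg := B.filter (fun v => ¬ (g v = true)) with hFg
  have hdf : Disjoint Tf Ff := Finset.disjoint_filter_filter_not A A _
  have hdg : Disjoint Tg Fg := Finset.disjoint_filter_filter_not B B _
  rw [brY_split y f A, brY_split y g B, expand_prod y Tf Ff hdf, expand_prod y Tg Fg hdg,
    Finset.sum_mul_sum, Finset.sum_mul]
  refine Finset.sum_congr rfl fun U₁ hU₁ => ?_
  rw [Finset.sum_mul]
  refine Finset.sum_congr rfl fun U₂ hU₂ => ?_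
  have hU₁F : U₁ ⊆ Ff := Finset.mem_powerset.1 hU₁
  have hU₂F : U₂ ⊆ Fg := Finset.mem_powerset.1 hU₂
  have hS₁A : Tf ∪ U₁ ⊆ A := Finset.union_subset (Finset.filter_subset _ _)
    (hU₁F.trans (Finset.filter_subset _ _))
  have hS₂B : Tg ∪ U₂ ⊆ B := Finset.union_subset (Finset.filter_subset _ _)
    (hU₂F.trans (Finset.filter_subset _ _))
  have hd12 : Disjoint (Tf ∪ U₁) (Tg ∪ U₂) := (hAB.mono_left hS₁A).mono_right hS₂B
  have hd12C : Disjoint ((Tf ∪ U₁) ∪ (Tg ∪ U₂)) C := Finset.disjoint_union_left.2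
    ⟨hAC.mono_left hS₁A, hBC.mono_left hS₂B⟩
  rw [prY_union y _ _ hd12C, prY_union y _ _ hd12]
  ring

lemma toReal_AC (hmeas : ∀ v, Measurable fun ω => X ω v) (A C : Finset V) (hAC : Disjoint A C) (f : V → Bool) :
    (P ({ω | ∀ v ∈ A, X ω v = f v} ∩ {ω | ∀ v ∈ C, X ω v = true})).toReal
      = ∑ U ∈ (A.filter (fun v => ¬ (f v = true))).powerset, (-1:ℝ)^U.card *
          (P {ω | ∀ v ∈ (A.filter (fun v => f v = true) ∪ U) ∪ C, X ω v = true}).toReal := by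
  have h1 : {ω : Ω | ∀ v ∈ A, X ω v = f v} ∩ {ω | ∀ v ∈ C, X ω v = true}
      = {ω | (∀ v ∈ A, X ω v = f v) ∧ (∀ v ∈ C, X ω v = true)} := (Set.setOf_and).symm
  have hQ : MeasurableSet {ω : Ω | (∀ v ∈ A, X ω v = f v) ∧ (∀ v ∈ C, X ω v = true)} := by
    rw [Set.setOf_and]
    exact (measE X hmeas A f).inter (measE X hmeas C (fun _ => true))
  have hkey := key_integral P (fun ω => brY (X ω) f A * prY (X ω) C)
    (fun ω => (∀ v ∈ A, X ω v = f v) ∧ (∀ v ∈ C, X ω v = true)) hQ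
    (fun ω => by
      show brY (X ω) f A * prY (X ω) C = _
      rw [brY_eq, prY_eq, mul_ite_ite])
  rw [h1, ← hkey.2]
  have hpt : (fun ω => brY (X ω) f A * prY (X ω) C)
      = fun ω => ∑ U ∈ (A.filter (fun v => ¬ (f v = true))).powerset,
          (-1:ℝ)^U.card * prY (X ω) ((A.filter (fun v => f v = true) ∪ U) ∪ C) :=
    funext fun ω => brY_mul_prY (X ω) f A C hAC
  rw [hpt, integral_finset_sum _ (fun U _ => ((integral_prY P X hmeas _).1.const_mul _))]
  refine Finset.sum_congr rfl fun U _ => ?_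
  rw [integral_const_mul, (integral_prY P X hmeas _).2]

lemma toReal_ABC (hmeas : ∀ v, Measurable fun ω => X ω v) (A B C : Finset V) (hAB : Disjoint A B) (hAC : Disjoint A C)
    (hBC : Disjoint B C) (f g : V → Bool) :
    (P ({ω | ∀ v ∈ A, X ω v = f v} ∩ {ω | ∀ v ∈ B, X ω v = g v}
        ∩ {ω | ∀ v ∈ C, X ω v = true})).toReal
      = ∑ U₁ ∈ (A.filter (fun v => ¬ (f v = true))).powerset,
        ∑ U₂ ∈ (B.filter (fun v => ¬ (g v = true))).powerset,
          (-1:ℝ)^U₁.card * (-1:ℝ)^U₂.card *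
            (P {ω | ∀ v ∈ ((A.filter (fun v => f v = true) ∪ U₁)
              ∪ (B.filter (fun v => g v = true) ∪ U₂)) ∪ C, X ω v = true}).toReal := by
  have h1 : {ω : Ω | ∀ v ∈ A, X ω v = f v} ∩ {ω | ∀ v ∈ B, X ω v = g v}
        ∩ {ω | ∀ v ∈ C, X ω v = true}
      = {ω | ((∀ v ∈ A, X ω v = f v) ∧ (∀ v ∈ B, X ω v = g v))
          ∧ (∀ v ∈ C, X ω v = true)} := by
    rw [Set.setOf_and, Set.setOf_and]
  have hQ : MeasurableSet {ω : Ω | ((∀ v ∈ A, X ω v = f v) ∧ (∀ v ∈ B, X ω v = g v))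
      ∧ (∀ v ∈ C, X ω v = true)} := by
    rw [Set.setOf_and, Set.setOf_and]
    exact (((measE X hmeas A f).inter (measE X hmeas B g)).inter
      (measE X hmeas C (fun _ => true)))
  have hkey := key_integral P (fun ω => brY (X ω) f A * brY (X ω) g B * prY (X ω) C)
    (fun ω => ((∀ v ∈ A, X ω v = f v) ∧ (∀ v ∈ B, X ω v = g v))
      ∧ (∀ v ∈ C, X ω v = true)) hQ
    (fun ω => by
      show brY (X ω) f A * brY (X ω) g B * prY (X ω) C = _
      rw [brY_eq, brY_eq, prY_eq, mul_ite_ite3])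
  rw [h1, ← hkey.2]
  have hpt : (fun ω => brY (X ω) f A * brY (X ω) g B * prY (X ω) C)
      = fun ω => ∑ U₁ ∈ (A.filter (fun v => ¬ (f v = true))).powerset,
        ∑ U₂ ∈ (B.filter (fun v => ¬ (g v = true))).powerset,
          (-1:ℝ)^U₁.card * (-1:ℝ)^U₂.card *
            prY (X ω) (((A.filter (fun v => f v = true) ∪ U₁)
              ∪ (B.filter (fun v => g v = true) ∪ U₂)) ∪ C) :=
    funext fun ω => brY_mul_brY_mul_prY (X ω) f g A B C hAB hAC hBC
  rw [hpt, integral_finset_sum _ (fun U₁ _ => integrable_finset_sum _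
    (fun U₂ _ => ((integral_prY P X hmeas _).1.const_mul _)))]
  refine Finset.sum_congr rfl fun U₁ _ => ?_
  rw [integral_finset_sum _ (fun U₂ _ => ((integral_prY P X hmeas _).1.const_mul _))]
  refine Finset.sum_congr rfl fun U₂ _ => ?_
  rw [integral_const_mul, (integral_prY P X hmeas _).2]


lemma AC_int (hmeas : ∀ v, Measurable fun ω => X ω v) (A C : Finset V) (f : V → Bool) :
    Integrable (fun ω => brY (X ω) f A * prY (X ω) C) P ∧
    (P ({ω | ∀ v ∈ A, X ω v = f v} ∩ {ω | ∀ v ∈ C, X ω v = true})).toReal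
      = ∫ ω, brY (X ω) f A * prY (X ω) C ∂P := by
  have h1 : {ω : Ω | ∀ v ∈ A, X ω v = f v} ∩ {ω | ∀ v ∈ C, X ω v = true}
      = {ω | (∀ v ∈ A, X ω v = f v) ∧ (∀ v ∈ C, X ω v = true)} := (Set.setOf_and).symm
  have hQ : MeasurableSet {ω : Ω | (∀ v ∈ A, X ω v = f v) ∧ (∀ v ∈ C, X ω v = true)} := by
    rw [Set.setOf_and]
    exact (measE X hmeas A f).inter (measE X hmeas C (fun _ => true))
  have hkey := key_integral P (fun ω => brY (X ω) f A * prY (X ω) C)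
    (fun ω => (∀ v ∈ A, X ω v = f v) ∧ (∀ v ∈ C, X ω v = true)) hQ
    (fun ω => by
      show brY (X ω) f A * prY (X ω) C = _
      rw [brY_eq, prY_eq, mul_ite_ite])
  exact ⟨hkey.1, by rw [h1, hkey.2]⟩

lemma ABC_int (hmeas : ∀ v, Measurable fun ω => X ω v) (A B C : Finset V) (f g : V → Bool) :
    Integrable (fun ω => brY (X ω) f A * brY (X ω) g B * prY (X ω) C) P ∧
    (P ({ω | ∀ v ∈ A, X ω v = f v} ∩ {ω | ∀ v ∈ B, X ω v = g v}
        ∩ {ω | ∀ v ∈ C, X ω v = true})).toReal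
      = ∫ ω, brY (X ω) f A * brY (X ω) g B * prY (X ω) C ∂P := by
  have h1 : {ω : Ω | ∀ v ∈ A, X ω v = f v} ∩ {ω | ∀ v ∈ B, X ω v = g v}
        ∩ {ω | ∀ v ∈ C, X ω v = true}
      = {ω | ((∀ v ∈ A, X ω v = f v) ∧ (∀ v ∈ B, X ω v = g v))
          ∧ (∀ v ∈ C, X ω v = true)} := by
    rw [Set.setOf_and, Set.setOf_and]
  have hQ : MeasurableSet {ω : Ω | ((∀ v ∈ A, X ω v = f v) ∧ (∀ v ∈ B, X ω v = g v))
      ∧ (∀ v ∈ C, X ω v = true)} := by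
    rw [Set.setOf_and, Set.setOf_and]
    exact (((measE X hmeas A f).inter (measE X hmeas B g)).inter
      (measE X hmeas C (fun _ => true)))
  have hkey := key_integral P (fun ω => brY (X ω) f A * brY (X ω) g B * prY (X ω) C)
    (fun ω => ((∀ v ∈ A, X ω v = f v) ∧ (∀ v ∈ B, X ω v = g v))
      ∧ (∀ v ∈ C, X ω v = true)) hQ
    (fun ω => by
      show brY (X ω) f A * brY (X ω) g B * prY (X ω) C = _
      rw [brY_eq, brY_eq, prY_eq, mul_ite_ite3])
  exact ⟨hkey.1, by rw [h1, hkey.2]⟩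

lemma sum_toReal_AC (hmeas : ∀ v, Measurable fun ω => X ω v) (A C : Finset V)
    (a : V) (ha : a ∈ A) (haC : a ∉ C) :
    ∑ R ∈ (A.erase a).powerset,
      (P ({ω | ∀ v ∈ A, X ω v = decide (v ∈ insert a R)} ∩ {ω | ∀ v ∈ C, X ω v = true})).toReal
      = (P {ω | ∀ v ∈ insert a C, X ω v = true}).toReal := by
  rw [Finset.sum_congr rfl (fun R _ => (AC_int P X hmeas A C _).2),
    ← integral_finset_sum _ (fun R _ => (AC_int P X hmeas A C _).1)]
  have hpt : (fun ω => ∑ R ∈ (A.erase a).powerset,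
        brY (X ω) (fun v => decide (v ∈ insert a R)) A * prY (X ω) C)
      = fun ω => prY (X ω) (insert a C) := by
    funext ω
    rw [← Finset.sum_mul, sum_brY (X ω) A a ha, ← prY_insert _ _ _ haC]
  rw [hpt]
  exact (integral_prY P X hmeas _).2

lemma sum_sum_toReal_ABC (hmeas : ∀ v, Measurable fun ω => X ω v) (A B C : Finset V)
    (a b : V) (ha : a ∈ A) (hb : b ∈ B) (haC : a ∉ C) (hbC : b ∉ C) (hab : a ≠ b) :
    ∑ R ∈ (A.erase a).powerset, ∑ R' ∈ (B.erase b).powerset,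
      (P ({ω | ∀ v ∈ A, X ω v = decide (v ∈ insert a R)}
          ∩ {ω | ∀ v ∈ B, X ω v = decide (v ∈ insert b R')}
          ∩ {ω | ∀ v ∈ C, X ω v = true})).toReal
      = (P {ω | ∀ v ∈ insert a (insert b C), X ω v = true}).toReal := by
  have hterm : ∀ R ∈ (A.erase a).powerset,
      (∑ R' ∈ (B.erase b).powerset,
        (P ({ω | ∀ v ∈ A, X ω v = decide (v ∈ insert a R)}
          ∩ {ω | ∀ v ∈ B, X ω v = decide (v ∈ insert b R')}
          ∩ {ω | ∀ v ∈ C, X ω v = true})).toReal)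
      = ∫ ω, (∑ R' ∈ (B.erase b).powerset,
          brY (X ω) (fun v => decide (v ∈ insert a R)) A
            * brY (X ω) (fun v => decide (v ∈ insert b R')) B * prY (X ω) C) ∂P := by
    intro R _
    rw [Finset.sum_congr rfl (fun R' _ => (ABC_int P X hmeas A B C _ _).2),
      ← integral_finset_sum _ (fun R' _ => (ABC_int P X hmeas A B C _ _).1)]
  rw [Finset.sum_congr rfl hterm,
    ← integral_finset_sum _ (fun R _ => integrable_finset_sum _
      (fun R' _ => (ABC_int P X hmeas A B C _ _).1))]
  have hpt : (fun ω => ∑ R ∈ (A.erase a).powerset, ∑ R' ∈ (B.erase b).powerset,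
        brY (X ω) (fun v => decide (v ∈ insert a R)) A
          * brY (X ω) (fun v => decide (v ∈ insert b R')) B * prY (X ω) C)
      = fun ω => prY (X ω) (insert a (insert b C)) := by
    funext ω
    have h2 : ∑ R ∈ (A.erase a).powerset, ∑ R' ∈ (B.erase b).powerset,
        brY (X ω) (fun v => decide (v ∈ insert a R)) A
          * brY (X ω) (fun v => decide (v ∈ insert b R')) B * prY (X ω) C
        = (∑ R ∈ (A.erase a).powerset, brY (X ω) (fun v => decide (v ∈ insert a R)) A)
          * (∑ R' ∈ (B.erase b).powerset, brY (X ω) (fun v => decide (v ∈ insert b R')) B)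
          * prY (X ω) C := by
      rw [Finset.sum_mul_sum, Finset.sum_mul]
      refine Finset.sum_congr rfl fun R _ => ?_
      rw [Finset.sum_mul]
    rw [h2, sum_brY (X ω) A a ha, sum_brY (X ω) B b hb,
      prY_insert _ _ _ (by simp [hab, haC] : a ∉ insert b C),
      prY_insert _ _ _ hbC, mul_assoc]
  rw [hpt]
  exact (integral_prY P X hmeas _).2

end Meas2

end Stmt9

/-- For a DPP `X` with kernel `K` and disjoint nonempty `A, B, C` with `K_{A∪B∪C}`, `K_C`
invertible and `P(X_C = 1_C) > 0`: the `(A,B)` block of `(K_{A∪B∪C})⁻¹` is zero iff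
`X_A` and `X_B` are conditionally independent given the event `{X_C = 1_C}`. -/
theorem stmt9 {V : Type*} [Fintype V] [DecidableEq V]
    {Ω : Type*} [MeasurableSpace Ω] (P : Measure Ω) [IsProbabilityMeasure P]
    (K : Matrix V V ℝ) (hsym : K.IsSymm)
    (hpsd : K.PosSemidef) (hpsd' : (1 - K).PosSemidef)
    (X : Ω → V → Bool) (hmeas : ∀ v, Measurable fun ω => X ω v)
    (hdpp : ∀ S : Finset V,
      (P {ω | ∀ v ∈ S, X ω v = true}).toReal = (psub K S).det)
    (A B C : Finset V) (hA : A.Nonempty) (hB : B.Nonempty) (hC : C.Nonempty)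
    (hAB : Disjoint A B) (hAC : Disjoint A C) (hBC : Disjoint B C)
    (hinv1 : IsUnit (psub K (A ∪ B ∪ C)).det) (hinv2 : IsUnit (psub K C).det)
    (hCpos : 0 < P {ω | ∀ v ∈ C, X ω v = true}) :
    (∀ i j : ↥(A ∪ B ∪ C), (i : V) ∈ A → (j : V) ∈ B →
        (psub K (A ∪ B ∪ C))⁻¹ i j = 0)
      ↔ ∀ f g : V → Bool,
          P ({ω | ∀ v ∈ A, X ω v = f v} ∩ {ω | ∀ v ∈ B, X ω v = g v}
              ∩ {ω | ∀ v ∈ C, X ω v = true})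
            * P {ω | ∀ v ∈ C, X ω v = true}
          = P ({ω | ∀ v ∈ A, X ω v = f v} ∩ {ω | ∀ v ∈ C, X ω v = true})
            * P ({ω | ∀ v ∈ B, X ω v = g v} ∩ {ω | ∀ v ∈ C, X ω v = true}) := by
  classical
  have hdetC : (psub K C).det ≠ 0 := hinv2.ne_zero
  rw [Stmt9.block_iff K hsym A B C hAB hAC hBC hinv1 hinv2]
  constructor
  · -- zero Schur off-block ⇒ conditional independence
    intro hzero f g
    have comb : ∀ S₁ S₂ : Finset V, S₁ ⊆ A → S₂ ⊆ B →
        (P {ω | ∀ v ∈ (S₁ ∪ S₂) ∪ C, X ω v = true}).toReal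
          * (P {ω | ∀ v ∈ C, X ω v = true}).toReal
        = (P {ω | ∀ v ∈ S₁ ∪ C, X ω v = true}).toReal
          * (P {ω | ∀ v ∈ S₂ ∪ C, X ω v = true}).toReal := by
      intro S₁ S₂ hS₁ hS₂
      rw [hdpp, hdpp, hdpp, hdpp]
      have d1 : Disjoint (S₁ ∪ S₂) C :=
        Finset.disjoint_union_left.2 ⟨hAC.mono_left hS₁, hBC.mono_left hS₂⟩
      rw [Stmt9.det_psub_union K (S₁ ∪ S₂) C d1 hinv2,
        Stmt9.det_psub_union K S₁ C (hAC.mono_left hS₁) hinv2,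
        Stmt9.det_psub_union K S₂ C (hBC.mono_left hS₂) hinv2,
        Stmt9.det_psub_split (Stmt9.schur K C) S₁ S₂ (hAB.mono hS₁ hS₂)
          (fun i hi j hj => hzero i (hS₁ hi) j (hS₂ hj))]
      ring
    have main : (P ({ω | ∀ v ∈ A, X ω v = f v} ∩ {ω | ∀ v ∈ B, X ω v = g v}
            ∩ {ω | ∀ v ∈ C, X ω v = true})).toReal
          * (P {ω | ∀ v ∈ C, X ω v = true}).toReal
        = (P ({ω | ∀ v ∈ A, X ω v = f v} ∩ {ω | ∀ v ∈ C, X ω v = true})).toReal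
          * (P ({ω | ∀ v ∈ B, X ω v = g v} ∩ {ω | ∀ v ∈ C, X ω v = true})).toReal := by
      rw [Stmt9.toReal_ABC P X hmeas A B C hAB hAC hBC f g,
        Stmt9.toReal_AC P X hmeas A C hAC f, Stmt9.toReal_AC P X hmeas B C hBC g,
        Finset.sum_mul_sum, Finset.sum_mul]
      refine Finset.sum_congr rfl fun U₁ hU₁ => ?_
      rw [Finset.sum_mul]
      refine Finset.sum_congr rfl fun U₂ hU₂ => ?_
      have hS₁ : A.filter (fun v => f v = true) ∪ U₁ ⊆ A :=
        Finset.union_subset (Finset.filter_subset _ _)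
          ((Finset.mem_powerset.1 hU₁).trans (Finset.filter_subset _ _))
      have hS₂ : B.filter (fun v => g v = true) ∪ U₂ ⊆ B :=
        Finset.union_subset (Finset.filter_subset _ _)
          ((Finset.mem_powerset.1 hU₂).trans (Finset.filter_subset _ _))
      have hc := comb _ _ hS₁ hS₂
      calc (-1:ℝ)^U₁.card * (-1:ℝ)^U₂.card *
            (P {ω | ∀ v ∈ ((A.filter (fun v => f v = true) ∪ U₁)
              ∪ (B.filter (fun v => g v = true) ∪ U₂)) ∪ C, X ω v = true}).toReal
            * (P {ω | ∀ v ∈ C, X ω v = true}).toReal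
          = (-1:ℝ)^U₁.card * (-1:ℝ)^U₂.card *
            ((P {ω | ∀ v ∈ ((A.filter (fun v => f v = true) ∪ U₁)
              ∪ (B.filter (fun v => g v = true) ∪ U₂)) ∪ C, X ω v = true}).toReal
            * (P {ω | ∀ v ∈ C, X ω v = true}).toReal) := by ring
        _ = (-1:ℝ)^U₁.card * (-1:ℝ)^U₂.card *
            ((P {ω | ∀ v ∈ (A.filter (fun v => f v = true) ∪ U₁) ∪ C, X ω v = true}).toReal
            * (P {ω | ∀ v ∈ (B.filter (fun v => g v = true) ∪ U₂) ∪ C, X ω v = true}).toReal) := by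
            rw [hc]
        _ = (-1:ℝ)^U₁.card *
              (P {ω | ∀ v ∈ (A.filter (fun v => f v = true) ∪ U₁) ∪ C, X ω v = true}).toReal
            * ((-1:ℝ)^U₂.card *
              (P {ω | ∀ v ∈ (B.filter (fun v => g v = true) ∪ U₂) ∪ C, X ω v = true}).toReal) := by
            ring
    have hne1 : P ({ω | ∀ v ∈ A, X ω v = f v} ∩ {ω | ∀ v ∈ B, X ω v = g v}
        ∩ {ω | ∀ v ∈ C, X ω v = true}) * P {ω | ∀ v ∈ C, X ω v = true} ≠ ⊤ :=
      ENNReal.mul_ne_top (measure_ne_top P _) (measure_ne_top P _)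
    have hne2 : P ({ω | ∀ v ∈ A, X ω v = f v} ∩ {ω | ∀ v ∈ C, X ω v = true})
        * P ({ω | ∀ v ∈ B, X ω v = g v} ∩ {ω | ∀ v ∈ C, X ω v = true}) ≠ ⊤ :=
      ENNReal.mul_ne_top (measure_ne_top P _) (measure_ne_top P _)
    rw [← ENNReal.toReal_eq_toReal_iff' hne1 hne2, ENNReal.toReal_mul, ENNReal.toReal_mul]
    exact main
  · -- conditional independence ⇒ zero Schur off-block
    intro hfac a ha b hb
    have hab : a ≠ b := fun h => Finset.disjoint_left.1 hAB ha (h ▸ hb)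
    have haC : a ∉ C := Finset.disjoint_left.1 hAC ha
    have hbC : b ∉ C := Finset.disjoint_left.1 hBC hb
    have hfac' : ∀ f g : V → Bool,
        (P ({ω | ∀ v ∈ A, X ω v = f v} ∩ {ω | ∀ v ∈ B, X ω v = g v}
            ∩ {ω | ∀ v ∈ C, X ω v = true})).toReal
          * (P {ω | ∀ v ∈ C, X ω v = true}).toReal
        = (P ({ω | ∀ v ∈ A, X ω v = f v} ∩ {ω | ∀ v ∈ C, X ω v = true})).toReal
          * (P ({ω | ∀ v ∈ B, X ω v = g v} ∩ {ω | ∀ v ∈ C, X ω v = true})).toReal := by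
      intro f g
      have h := congrArg ENNReal.toReal (hfac f g)
      rwa [ENNReal.toReal_mul, ENNReal.toReal_mul] at h
    have key : (P {ω | ∀ v ∈ insert a (insert b C), X ω v = true}).toReal
          * (P {ω | ∀ v ∈ C, X ω v = true}).toReal
        = (P {ω | ∀ v ∈ insert a C, X ω v = true}).toReal
          * (P {ω | ∀ v ∈ insert b C, X ω v = true}).toReal := by
      rw [← Stmt9.sum_sum_toReal_ABC P X hmeas A B C a b ha hb haC hbC hab,
        ← Stmt9.sum_toReal_AC P X hmeas A C a ha haC,
        ← Stmt9.sum_toReal_AC P X hmeas B C b hb hbC,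
        Finset.sum_mul_sum, Finset.sum_mul]
      refine Finset.sum_congr rfl fun R _ => ?_
      rw [Finset.sum_mul]
      exact Finset.sum_congr rfl fun R' _ => hfac' _ _
    rw [hdpp, hdpp, hdpp, hdpp] at key
    have e1 : insert a (insert b C) = ({a, b} : Finset V) ∪ C := by ext x; simp [or_assoc]
    have e2 : insert a C = ({a} : Finset V) ∪ C := by ext x; simp
    have e3 : insert b C = ({b} : Finset V) ∪ C := by ext x; simp
    rw [e1, e2, e3] at key
    have dab : Disjoint ({a, b} : Finset V) C := by
      simp [Finset.disjoint_left, haC, hbC]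
    have da : Disjoint ({a} : Finset V) C := by simp [Finset.disjoint_left, haC]
    have db : Disjoint ({b} : Finset V) C := by simp [Finset.disjoint_left, hbC]
    rw [Stmt9.det_psub_union K {a, b} C dab hinv2, Stmt9.det_psub_union K {a} C da hinv2,
      Stmt9.det_psub_union K {b} C db hinv2, Stmt9.det_psub_pair _ a b hab,
      Stmt9.det_psub_singleton, Stmt9.det_psub_singleton] at key
    have h5 : (psub K C).det * (psub K C).det
        * (Stmt9.schur K C a b * Stmt9.schur K C b a) = 0 := by
      linear_combination -key
    have h6 : Stmt9.schur K C a b * Stmt9.schur K C b a = 0 :=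
      (mul_eq_zero.1 h5).resolve_left (mul_ne_zero hdetC hdetC)
    rw [Stmt9.schur_isSymm K hsym C a b] at h6
    exact mul_self_eq_zero.1 h6
end

section
/- Let X be a determinantal point process with kernel K and let D ⊆ V be a disjoint union of sets C_1, …, C_r with K_{C_m, C_{m'}} = 0 for m ≠ m'. Then the random subvectors X_{C_1}, …, X_{C_r} are mutually independent: for every i ∈ {0,1}^D, P(X_D = i_D) = ∏_{m=1}^r P(X_{C_m} = i_{C_m}). -/
/-!
For `S_m ⊆ C_m`, the principal submatrix of `K` on `⋃ S_m` is block diagonal, so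
`P(X_{⋃ S_m} = 1) = det K_{⋃ S_m} = ∏ det K_{S_m} = ∏ P(X_{S_m} = 1)`. Thus the π-systems of
events `{X_S = 1}`, `S ⊆ C_m`, are independent; by Dynkin's π-λ theorem so are the σ-algebras
they generate, and `{X_D = f_D}` is the intersection of the events `{X_{C_m} = f_{C_m}}`, each
measurable for the corresponding σ-algebra.
-/

open Matrix MeasureTheory

open ProbabilityTheory

section BlockDeterminant

variable {V : Type*} [DecidableEq V]

theorem det_psub_union_of_eq_zero (K : Matrix V V ℝ) {S T : Finset V} (hST : Disjoint S T)
    (hK : ∀ a ∈ S, ∀ b ∈ T, K a b = 0) :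
    (psub K (S ∪ T)).det = (psub K S).det * (psub K T).det := by
  rw [← det_submatrix_equiv_self (Equiv.Finset.union S T hST),
    ← det_fromBlocks_zero₁₂ (psub K S) (K.submatrix (↑) (↑)) (psub K T)]
  congr 1
  ext (i | i) (j | j)
  · rfl
  · simp [psub, hK _ i.2 _ j.2]
  · rfl
  · rfl

theorem det_psub_biUnion_of_eq_zero {ι : Type*} [DecidableEq ι] (K : Matrix V V ℝ)
    (s : Finset ι) (S : ι → Finset V) (hS : (s : Set ι).PairwiseDisjoint S)
    (hK : ∀ i ∈ s, ∀ j ∈ s, i ≠ j → ∀ a ∈ S i, ∀ b ∈ S j, K a b = 0) :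
    (psub K (s.biUnion S)).det = ∏ i ∈ s, (psub K (S i)).det := by
  induction s using Finset.induction_on with
  | empty => rw [Finset.biUnion_empty, Finset.prod_empty]; exact Matrix.det_isEmpty
  | @insert i s hi ih =>
    have hne : ∀ j ∈ s, i ≠ j := fun j hj h => hi (h ▸ hj)
    rw [Finset.biUnion_insert, Finset.prod_insert hi, det_psub_union_of_eq_zero, ih]
    · exact hS.subset (by simp)
    · exact fun j hj j' hj' => hK j (by simp [hj]) j' (by simp [hj'])
    · exact (Finset.disjoint_biUnion_right _ _ _).mpr fun j hj =>
        hS (by simp) (by simp [hj]) (hne j hj)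
    · intro a ha b hb
      obtain ⟨j, hj, hb⟩ := Finset.mem_biUnion.mp hb
      exact hK i (by simp) j (by simp [hj]) (hne j hj) a ha b hb

end BlockDeterminant

section AllOnes

variable {Ω V : Type*}

def allOnes (X : Ω → V → Bool) (S : Finset V) : Set Ω :=
  {ω | ∀ v ∈ S, X ω v = true}

def allOnesEvents (X : Ω → V → Bool) (C : Finset V) : Set (Set Ω) :=
  allOnes X '' {S | S ⊆ C}

variable {X : Ω → V → Bool}

section Union

variable [DecidableEq V]

theorem allOnes_union (S T : Finset V) : allOnes X (S ∪ T) = allOnes X S ∩ allOnes X T := by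
  ext ω
  simp only [allOnes, Finset.mem_union, Set.mem_ofPred_eq, Set.mem_inter_iff]
  grind

theorem allOnes_biUnion {ι : Type*} (s : Finset ι) (S : ι → Finset V) :
    allOnes X (s.biUnion S) = ⋂ i ∈ s, allOnes X (S i) := by
  ext ω
  simp only [allOnes, Finset.mem_biUnion, Set.mem_ofPred_eq, Set.mem_iInter]
  grind

theorem isPiSystem_allOnesEvents (C : Finset V) : IsPiSystem (allOnesEvents X C) := by
  rintro _ ⟨S, hS, rfl⟩ _ ⟨T, hT, rfl⟩ -
  exact ⟨S ∪ T, Finset.union_subset hS hT, allOnes_union S T⟩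

end Union

theorem measurableSet_generateFrom_allOnesEvents (C : Finset V) (f : V → Bool) :
    MeasurableSet[MeasurableSpace.generateFrom (allOnesEvents X C)]
      {ω | ∀ v ∈ C, X ω v = f v} := by
  simp only [Set.ofPred_forall]
  refine Finset.measurableSet_biInter C fun v hv => ?_
  have hsingle : MeasurableSet[MeasurableSpace.generateFrom (allOnesEvents X C)]
      (allOnes X {v}) :=
    MeasurableSpace.measurableSet_generateFrom ⟨{v}, by simpa using hv, rfl⟩
  cases f v with
  | true => simpa [allOnes] using hsingle
  | false =>
    convert hsingle.compl using 1
    ext ω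
    simp [allOnes]

variable [MeasurableSpace Ω]

theorem measurableSet_allOnes (hX : ∀ v, Measurable fun ω => X ω v) (S : Finset V) :
    MeasurableSet (allOnes X S) := by
  simp only [allOnes, Set.ofPred_forall]
  exact Finset.measurableSet_biInter S fun v _ => hX v (measurableSet_singleton true)

theorem generateFrom_allOnesEvents_le (hX : ∀ v, Measurable fun ω => X ω v) (C : Finset V) :
    MeasurableSpace.generateFrom (allOnesEvents X C) ≤ ‹MeasurableSpace Ω› :=
  MeasurableSpace.generateFrom_le <| by
    rintro _ ⟨S, -, rfl⟩
    exact measurableSet_allOnes hX S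

theorem iIndep_generateFrom_allOnesEvents [DecidableEq V] {ι : Type*} (P : Measure Ω)
    (hX : ∀ v, Measurable fun ω => X ω v) (C : ι → Finset V)
    (hP : ∀ (s : Finset ι) (S : ι → Finset V), (∀ i ∈ s, S i ⊆ C i) →
      P (allOnes X (s.biUnion S)) = ∏ i ∈ s, P (allOnes X (S i))) :
    iIndep (fun i => MeasurableSpace.generateFrom (allOnesEvents X (C i))) P := by
  refine iIndepSets.iIndep (fun i => generateFrom_allOnesEvents_le hX (C i)) _
    (fun i => isPiSystem_allOnesEvents (C i)) (fun i => rfl) ?_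
  rw [iIndepSets_iff]
  intro s E hE
  choose! S hSC hSE using hE
  calc P (⋂ i ∈ s, E i) = P (allOnes X (s.biUnion S)) := by
        rw [allOnes_biUnion]
        exact congrArg P (Set.iInter₂_congr fun i hi => (hSE i hi).symm)
    _ = ∏ i ∈ s, P (E i) := by
        rw [hP s S hSC]
        exact Finset.prod_congr rfl fun i hi => by rw [hSE i hi]

end AllOnes

theorem stmt12_general {V : Type*} [DecidableEq V]
    {Ω : Type*} [MeasurableSpace Ω] (P : Measure Ω) [IsProbabilityMeasure P]
    (K : Matrix V V ℝ)
    (X : Ω → V → Bool) (hmeas : ∀ v, Measurable fun ω => X ω v)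
    (hdpp : ∀ S : Finset V,
      (P {ω | ∀ v ∈ S, X ω v = true}).toReal = (psub K S).det)
    (r : ℕ) (C : Fin r → Finset V) (D : Finset V)
    (hdisj : ∀ m m', m ≠ m' → Disjoint (C m) (C m'))
    (hD : D = Finset.univ.biUnion C)
    (hblock : ∀ m m', m ≠ m' → ∀ a ∈ C m, ∀ b ∈ C m', K a b = 0) :
    ∀ f : V → Bool,
      P {ω | ∀ v ∈ D, X ω v = f v} = ∏ m, P {ω | ∀ v ∈ C m, X ω v = f v} := by
  intro f
  have hfactor : ∀ (s : Finset (Fin r)) (S : Fin r → Finset V), (∀ m ∈ s, S m ⊆ C m) →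
      P (allOnes X (s.biUnion S)) = ∏ m ∈ s, P (allOnes X (S m)) := by
    intro s S hSC
    rw [← ENNReal.toReal_eq_toReal_iff' (measure_ne_top P _)
      (ENNReal.prod_ne_top fun m _ => measure_ne_top P _), ENNReal.toReal_prod]
    simp only [allOnes, hdpp]
    refine det_psub_biUnion_of_eq_zero K s S
      (fun m hm m' hm' hne => (hdisj m m' hne).mono (hSC m hm) (hSC m' hm'))
      fun m hm m' hm' hne a ha b hb => hblock m m' hne a (hSC m hm ha) b (hSC m' hm' hb)
  have hD_event : {ω | ∀ v ∈ D, X ω v = f v} = ⋂ m, {ω | ∀ v ∈ C m, X ω v = f v} := by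
    ext ω
    simp only [hD, Finset.mem_biUnion, Finset.mem_univ, true_and, Set.mem_ofPred_eq,
      Set.mem_iInter]
    grind
  rw [hD_event]
  exact (iIndep_generateFrom_allOnesEvents P hmeas C hfactor).meas_iInter
    fun m => measurableSet_generateFrom_allOnesEvents (C m) f

/-- For a DPP `X` with kernel `K`, if `D` is a disjoint union of sets `C_1, …, C_r` with
`K_{C_m, C_{m'}} = 0` for `m ≠ m'`, then the subvectors `X_{C_1}, …, X_{C_r}` are mutually
independent: `P(X_D = i_D) = ∏ m, P(X_{C_m} = i_{C_m})`. -/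
theorem stmt12 {V : Type*} [Fintype V] [DecidableEq V]
    {Ω : Type*} [MeasurableSpace Ω] (P : Measure Ω) [IsProbabilityMeasure P]
    (K : Matrix V V ℝ) (hsym : K.IsSymm)
    (hpsd : K.PosSemidef) (hpsd' : (1 - K).PosSemidef)
    (X : Ω → V → Bool) (hmeas : ∀ v, Measurable fun ω => X ω v)
    (hdpp : ∀ S : Finset V,
      (P {ω | ∀ v ∈ S, X ω v = true}).toReal = (psub K S).det)
    (r : ℕ) (C : Fin r → Finset V) (D : Finset V)
    (hdisj : ∀ m m', m ≠ m' → Disjoint (C m) (C m'))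
    (hD : D = Finset.univ.biUnion C)
    (hblock : ∀ m m', m ≠ m' → ∀ a ∈ C m, ∀ b ∈ C m', K a b = 0) :
    ∀ f : V → Bool,
      P {ω | ∀ v ∈ D, X ω v = f v} = ∏ m, P {ω | ∀ v ∈ C m, X ω v = f v} :=
  stmt12_general P K X hmeas hdpp r C D hdisj hD hblock
end

section
/- The independence model of a DPP satisfies singleton-transitivity in the marginal case: for distinct i, j, l ∈ V, if X_i ⫫ X_j and X_i ⫫ X_j | X_l = 1, then X_i ⫫ X_l or X_j ⫫ X_l; equivalently, if K_{ij} = 0 and K_{ij}K_{ll} = K_{il}K_{jl}, then K_{il} = 0 or K_{jl} = 0. -/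
open Matrix MeasureTheory

def sEquiv1 {V : Type*} [DecidableEq V] (v : V) : Fin 1 ≃ ({v} : Finset V) where
  toFun _ := ⟨v, by simp⟩
  invFun _ := 0
  left_inv x := by fin_cases x <;> rfl
  right_inv y := by
    obtain ⟨y, hy⟩ := y
    simp only [Finset.mem_singleton] at hy
    subst hy; rfl

def sEquiv2 {V : Type*} [DecidableEq V] (v w : V) (h : v ≠ w) :
    Fin 2 ≃ ({v, w} : Finset V) where
  toFun x := if x = 0 then ⟨v, by simp⟩ else ⟨w, by simp⟩
  invFun y := if y.1 = v then 0 else 1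
  left_inv x := by fin_cases x <;> simp [h, Ne.symm h]
  right_inv y := by
    obtain ⟨y, hy⟩ := y
    simp only [Finset.mem_insert, Finset.mem_singleton] at hy
    rcases hy with rfl | rfl <;> simp [h, Ne.symm h]

def sEquiv3 {V : Type*} [DecidableEq V] (u v w : V) (huv : u ≠ v) (huw : u ≠ w)
    (hvw : v ≠ w) : Fin 3 ≃ ({u, v, w} : Finset V) where
  toFun x := if x = 0 then ⟨u, by simp⟩ else if x = 1 then ⟨v, by simp⟩ else ⟨w, by simp⟩
  invFun y := if y.1 = u then 0 else if y.1 = v then 1 else 2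
  left_inv x := by fin_cases x <;> simp [huv, huw, hvw, Ne.symm huv, Ne.symm huw, Ne.symm hvw]
  right_inv y := by
    obtain ⟨y, hy⟩ := y
    simp only [Finset.mem_insert, Finset.mem_singleton] at hy
    rcases hy with rfl | rfl | rfl <;>
      simp [huv, huw, hvw, Ne.symm huv, Ne.symm huw, Ne.symm hvw]

lemma det_psub1 {V : Type*} [DecidableEq V] (K : Matrix V V ℝ) (v : V) :
    (psub K {v}).det = K v v := by
  rw [← Matrix.det_submatrix_equiv_self (sEquiv1 v) (psub K {v})]
  rw [Matrix.det_unique]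
  rfl

lemma det_psub2 {V : Type*} [DecidableEq V] (K : Matrix V V ℝ) (v w : V) (h : v ≠ w) :
    (psub K {v, w}).det = K v v * K w w - K v w * K w v := by
  rw [← Matrix.det_submatrix_equiv_self (sEquiv2 v w h) (psub K {v, w})]
  rw [Matrix.det_fin_two]
  simp [sEquiv2, psub, Matrix.submatrix]


lemma det_psub3 {V : Type*} [DecidableEq V] (K : Matrix V V ℝ) (u v w : V)
    (huv : u ≠ v) (huw : u ≠ w) (hvw : v ≠ w) :
    (psub K {u, v, w}).det =
      K u u * K v v * K w w - K u u * K v w * K w v - K u v * K v u * K w w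
        + K u v * K v w * K w u + K u w * K v u * K w v - K u w * K v v * K w u := by
  rw [← Matrix.det_submatrix_equiv_self (sEquiv3 u v w huv huw hvw) (psub K {u, v, w})]
  rw [Matrix.det_fin_three]
  simp [sEquiv3, psub, Matrix.submatrix]


lemma set_single {Ω V : Type*} [DecidableEq V] (X : Ω → V → Bool) (v : V) :
    {ω | ∀ u ∈ ({v} : Finset V), X ω u = true} = {ω | X ω v = true} := by
  ext ω; simp

lemma set_pair {Ω V : Type*} [DecidableEq V] (X : Ω → V → Bool) (v w : V) :
    {ω | ∀ u ∈ ({v, w} : Finset V), X ω u = true}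
      = {ω | X ω v = true} ∩ {ω | X ω w = true} := by
  ext ω; simp [Set.mem_inter_iff]

lemma set_triple {Ω V : Type*} [DecidableEq V] (X : Ω → V → Bool) (u v w : V) :
    {ω | ∀ x ∈ ({u, v, w} : Finset V), X ω x = true}
      = {ω | X ω u = true} ∩ {ω | X ω v = true} ∩ {ω | X ω w = true} := by
  ext ω; simp [Set.mem_inter_iff, and_assoc]

lemma set_false {Ω V : Type*} (X : Ω → V → Bool) (v : V) :
    {ω | X ω v = false} = {ω | X ω v = true}ᶜ := by
  ext ω; simp

lemma indep_of_K_zero {V : Type*} [Fintype V] [DecidableEq V]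
    {Ω : Type*} [MeasurableSpace Ω] (P : Measure Ω) [IsProbabilityMeasure P]
    (K : Matrix V V ℝ) (hsym : K.IsSymm)
    (X : Ω → V → Bool) (hmeas : ∀ v, Measurable fun ω => X ω v)
    (hdpp : ∀ S : Finset V,
      (P {ω | ∀ v ∈ S, X ω v = true}).toReal = (psub K S).det)
    (v w : V) (hvw : v ≠ w) (hK : K v w = 0) :
    ∀ a b : Bool, P ({ω | X ω v = a} ∩ {ω | X ω w = b})
      = P {ω | X ω v = a} * P {ω | X ω w = b} := by
  set A := {ω | X ω v = true} with hAdef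
  set B := {ω | X ω w = true} with hBdef
  have hA : MeasurableSet A := (hmeas v) (measurableSet_singleton true)
  have hB : MeasurableSet B := (hmeas w) (measurableSet_singleton true)
  have hKwv : K w v = 0 := by rw [hsym.apply, hK]
  have pA : (P A).toReal = K v v := by rw [hAdef, ← set_single X v, hdpp, det_psub1]
  have pB : (P B).toReal = K w w := by rw [hBdef, ← set_single X w, hdpp, det_psub1]
  have pAB : (P (A ∩ B)).toReal = K v v * K w w := by
    rw [hAdef, hBdef, ← set_pair X v w, hdpp, det_psub2 K v w hvw, hK, hKwv]; ring
  -- complements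
  have pAc : (P Aᶜ).toReal = 1 - K v v := by
    rw [prob_compl_eq_one_sub hA, ENNReal.toReal_sub_of_le prob_le_one ENNReal.one_ne_top]
    simp [pA]
  have pBc : (P Bᶜ).toReal = 1 - K w w := by
    rw [prob_compl_eq_one_sub hB, ENNReal.toReal_sub_of_le prob_le_one ENNReal.one_ne_top]
    simp [pB]
  have key : ∀ (s : Set Ω) (t : Set Ω), MeasurableSet t →
      (P (s ∩ tᶜ)).toReal = (P s).toReal - (P (s ∩ t)).toReal := by
    intro s t ht
    have h := measure_inter_add_diff s ht (μ := P)
    rw [Set.diff_eq] at h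
    have := congrArg ENNReal.toReal h
    rw [ENNReal.toReal_add (measure_ne_top P _) (measure_ne_top P _)] at this
    linarith
  have pABc : (P (A ∩ Bᶜ)).toReal = K v v * (1 - K w w) := by
    rw [key A B hB, pA, pAB]; ring
  have pAcB : (P (Aᶜ ∩ B)).toReal = (1 - K v v) * K w w := by
    rw [Set.inter_comm, key B A hA, pB, Set.inter_comm, pAB]; ring
  have pAcBc : (P (Aᶜ ∩ Bᶜ)).toReal = (1 - K v v) * (1 - K w w) := by
    rw [key Aᶜ B hB, pAc, pAcB]; ring
  have lift : ∀ (s t : Set Ω), (P (s ∩ t)).toReal = (P s).toReal * (P t).toReal →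
      P (s ∩ t) = P s * P t := by
    intro s t h
    refine (ENNReal.toReal_eq_toReal_iff' (measure_ne_top P _) ?_).mp ?_
    · exact ENNReal.mul_ne_top (measure_ne_top P _) (measure_ne_top P _)
    · rw [ENNReal.toReal_mul, h]
  intro a b
  cases a <;> cases b <;> (try simp only [set_false])
  · exact lift _ _ (by rw [pAcBc, pAc, pBc])
  · exact lift _ _ (by rw [pAcB, pAc, pB])
  · exact lift _ _ (by rw [pABc, pA, pBc])
  · exact lift _ _ (by rw [pAB, pA, pB])

/-- Singleton-transitivity for DPPs in the marginal case: for distinct `i, j, l`, if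
`X_i ⪲ X_j` and `X_i ⪲ X_j | X_l = 1` then `X_i ⪲ X_l` or `X_j ⪲ X_l`; equivalently,
if `K_{ij} = 0` and `K_{ij} K_{ll} = K_{il} K_{jl}` then `K_{il} = 0` or `K_{jl} = 0`. -/
theorem stmt14 {V : Type*} [Fintype V] [DecidableEq V]
    {Ω : Type*} [MeasurableSpace Ω] (P : Measure Ω) [IsProbabilityMeasure P]
    (K : Matrix V V ℝ) (hsym : K.IsSymm)
    (hpsd : K.PosSemidef) (hpsd' : (1 - K).PosSemidef)
    (X : Ω → V → Bool) (hmeas : ∀ v, Measurable fun ω => X ω v)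
    (hdpp : ∀ S : Finset V,
      (P {ω | ∀ v ∈ S, X ω v = true}).toReal = (psub K S).det)
    (i j l : V) (hij : i ≠ j) (hil : i ≠ l) (hjl : j ≠ l) :
    ((∀ a b : Bool, P ({ω | X ω i = a} ∩ {ω | X ω j = b})
          = P {ω | X ω i = a} * P {ω | X ω j = b}) →
      (∀ a b : Bool,
        P ({ω | X ω i = a} ∩ {ω | X ω j = b} ∩ {ω | X ω l = true}) * P {ω | X ω l = true}
          = P ({ω | X ω i = a} ∩ {ω | X ω l = true})
            * P ({ω | X ω j = b} ∩ {ω | X ω l = true})) →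
      ((∀ a b : Bool, P ({ω | X ω i = a} ∩ {ω | X ω l = b})
            = P {ω | X ω i = a} * P {ω | X ω l = b})
        ∨ (∀ a b : Bool, P ({ω | X ω j = a} ∩ {ω | X ω l = b})
            = P {ω | X ω j = a} * P {ω | X ω l = b})))
    ∧ (K i j = 0 → K i j * K l l = K i l * K j l → K i l = 0 ∨ K j l = 0) := by
  constructor
  · intro h1 h2
    have pi' : (P {ω | X ω i = true}).toReal = K i i := by
      rw [← set_single X i, hdpp, det_psub1]
    have pj : (P {ω | X ω j = true}).toReal = K j j := by
      rw [← set_single X j, hdpp, det_psub1]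
    have pl : (P {ω | X ω l = true}).toReal = K l l := by
      rw [← set_single X l, hdpp, det_psub1]
    have pij : (P ({ω | X ω i = true} ∩ {ω | X ω j = true})).toReal
        = K i i * K j j - K i j * K j i := by
      rw [← set_pair X i j, hdpp, det_psub2 K i j hij]
    have pil : (P ({ω | X ω i = true} ∩ {ω | X ω l = true})).toReal
        = K i i * K l l - K i l * K l i := by
      rw [← set_pair X i l, hdpp, det_psub2 K i l hil]
    have pjl : (P ({ω | X ω j = true} ∩ {ω | X ω l = true})).toReal
        = K j j * K l l - K j l * K l j := by
      rw [← set_pair X j l, hdpp, det_psub2 K j l hjl]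
    have ptr : (P ({ω | X ω i = true} ∩ {ω | X ω j = true} ∩ {ω | X ω l = true})).toReal
        = K i i * K j j * K l l - K i i * K j l * K l j - K i j * K j i * K l l
          + K i j * K j l * K l i + K i l * K j i * K l j - K i l * K j j * K l i := by
      rw [← set_triple X i j l, hdpp, det_psub3 K i j l hij hil hjl]
    have hji : K j i = K i j := hsym.apply i j
    have hli : K l i = K i l := hsym.apply i l
    have hlj : K l j = K j l := hsym.apply j l
    have e1 := congrArg ENNReal.toReal (h1 true true)
    rw [ENNReal.toReal_mul, pij, pi', pj] at e1
    have hKij : K i j = 0 := by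
      have : K i j * K i j = 0 := by rw [hji] at e1; linarith
      exact mul_self_eq_zero.mp this
    have e2 := congrArg ENNReal.toReal (h2 true true)
    rw [ENNReal.toReal_mul, ENNReal.toReal_mul, ptr, pl, pil, pjl] at e2
    rw [hji, hli, hlj, hKij] at e2
    have hmul : K i l * K j l = 0 := by
      have h0 : (K i l * K j l) * (K i l * K j l) = 0 := by ring_nf at e2 ⊢; linarith
      exact mul_self_eq_zero.mp h0
    rcases mul_eq_zero.mp hmul with h | h
    · exact Or.inl (indep_of_K_zero P K hsym X hmeas hdpp i l hil h)
    · exact Or.inr (indep_of_K_zero P K hsym X hmeas hdpp j l hjl h)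
  · intro h1 h2
    rw [h1, zero_mul] at h2
    exact mul_eq_zero.mp h2.symm
end
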